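/- arXiv:1712.04192 — 2 statements merged into one kernel-verified Lean document; each statement's English description precedes it below -/
import Mathlib

section
/- Let θ ∈ (0, π/2) and η_c = ς·exp(-(i/2)·arg(v(c)-u(c))) be unit complex numbers attached to the four corners of a rhombus of side δ, with ς = exp(iπ/4). If real numbers F(c₀₀), F(c₀₁), F(c₁₀), F(c₁₁) satisfy the propagation equation F(c_{pq}) = F(c_{p,1-q})·cos θ + F(c_{1-p,q})·sin θ, then the complex numbers ψ_c := η_c·F(c) satisfy ψ_{c₀₀} + ψ_{c₁₁} = ψ_{c₀₁} + ψ_{c₁₀}. -/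
noncomputable section

/-- `ς = e^{iπ/4}`, the global prefactor in the definition of the Dirac spinor. -/
def varsigma : ℂ := Complex.exp (Complex.I * (Real.pi / 4))

/-- The two black vertices `v•₀ = -cos θ`, `v•₁ = cos θ` of a rhombus with side `1`
and half-angle `θ` at the black vertices. -/
def vb (θ : ℝ) : Fin 2 → ℂ := ![-(Real.cos θ : ℂ), (Real.cos θ : ℂ)]

/-- The two white vertices `v°₀ = -i sin θ`, `v°₁ = i sin θ` of the rhombus. -/
def vw (θ : ℝ) : Fin 2 → ℂ := ![-(Complex.I * (Real.sin θ : ℂ)), Complex.I * (Real.sin θ : ℂ)]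

/-- The Dirac spinor `η_c = ς · exp(-(i/2)·arg(v•(c) - v°(c)))` attached to the corner
`c_{pq}` of the rhombus (i.e. to the edge `(v•_p v°_q)`). -/
def eta (θ : ℝ) (p q : Fin 2) : ℂ :=
  varsigma * Complex.exp (-(Complex.I / 2) * ((vb θ p - vw θ q).arg : ℂ))

lemma arg_aux {a : ℝ} (h1 : -Real.pi < a) (h2 : a ≤ Real.pi) :
    Complex.arg ((Real.cos a : ℂ) + (Real.sin a : ℂ) * Complex.I) = a := by
  rw [show ((Real.cos a : ℂ) + (Real.sin a : ℂ) * Complex.I)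
      = Complex.cos a + Complex.sin a * Complex.I by
    rw [Complex.ofReal_cos, Complex.ofReal_sin]]
  exact Complex.arg_cos_add_sin_mul_I ⟨h1, h2⟩

lemma eta_eq {θ : ℝ} {p q : Fin 2} {a : ℝ} (h : (vb θ p - vw θ q).arg = a) :
    eta θ p q = (Real.cos (Real.pi / 4 - a / 2) : ℂ)
      + (Real.sin (Real.pi / 4 - a / 2) : ℂ) * Complex.I := by
  rw [eta, varsigma, h, ← Complex.exp_add,
    show Complex.I * ((Real.pi : ℂ) / 4) + -(Complex.I / 2) * (a : ℂ)
      = ((Real.pi / 4 - a / 2 : ℝ) : ℂ) * Complex.I by push_cast; ring,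
    Complex.exp_mul_I, Complex.ofReal_cos, Complex.ofReal_sin]

/-- **From the real propagation equation to the complex identity.**
If real corner values `F(c_{pq})` on the rhombus satisfy the propagation equation
`F(c_{pq}) = F(c_{p,1-q})·cos θ + F(c_{1-p,q})·sin θ` (here instantiated at the middle
corners `c₁₀` and `c₁₁`, which are the instances holding on one sheet of the double cover),
then `ψ_c := η_c·F(c)` satisfies `ψ_{c₀₀} + ψ_{c₁₁} = ψ_{c₀₁} + ψ_{c₁₀}`. -/
theorem psi_sum_identity (θ : ℝ) (hθ : θ ∈ Set.Ioo 0 (Real.pi / 2))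
    (F : Fin 2 → Fin 2 → ℝ)
    (h10 : F 1 0 = F 1 1 * Real.cos θ + F 0 0 * Real.sin θ)
    (h11 : F 1 1 = F 1 0 * Real.cos θ + F 0 1 * Real.sin θ) :
    eta θ 0 0 * (F 0 0 : ℂ) + eta θ 1 1 * (F 1 1 : ℂ)
      = eta θ 0 1 * (F 0 1 : ℂ) + eta θ 1 0 * (F 1 0 : ℂ) := by
  obtain ⟨hθ0, hθ1⟩ := hθ
  have hpi := Real.pi_pos
  -- the four arguments
  have a00 : (vb θ 0 - vw θ 0).arg = Real.pi - θ := by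
    rw [show vb θ 0 - vw θ 0
        = (Real.cos (Real.pi - θ) : ℂ) + (Real.sin (Real.pi - θ) : ℂ) * Complex.I by
      simp [vb, vw, Real.cos_pi_sub, Real.sin_pi_sub]; ring]
    exact arg_aux (by linarith) (by linarith)
  have a01 : (vb θ 0 - vw θ 1).arg = θ - Real.pi := by
    rw [show vb θ 0 - vw θ 1
        = (Real.cos (θ - Real.pi) : ℂ) + (Real.sin (θ - Real.pi) : ℂ) * Complex.I by
      rw [show θ - Real.pi = -(Real.pi - θ) by ring, Real.cos_neg, Real.sin_neg,
        Real.cos_pi_sub, Real.sin_pi_sub]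
      simp [vb, vw]; ring]
    exact arg_aux (by linarith) (by linarith)
  have a10 : (vb θ 1 - vw θ 0).arg = θ := by
    rw [show vb θ 1 - vw θ 0
        = (Real.cos θ : ℂ) + (Real.sin θ : ℂ) * Complex.I by
      simp [vb, vw]; ring]
    exact arg_aux (by linarith) (by linarith)
  have a11 : (vb θ 1 - vw θ 1).arg = -θ := by
    rw [show vb θ 1 - vw θ 1
        = (Real.cos (-θ) : ℂ) + (Real.sin (-θ) : ℂ) * Complex.I by
      rw [Real.cos_neg, Real.sin_neg]
      simp [vb, vw]; ring]
    exact arg_aux (by linarith) (by linarith)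
  -- half-angle notation
  set c := Real.cos (θ / 2) with hc
  set s := Real.sin (θ / 2) with hs
  have hcosθ : Real.cos θ = 2 * c ^ 2 - 1 := by
    rw [hc, show θ = 2 * (θ / 2) by ring, Real.cos_two_mul]; ring_nf
  have hsinθ : Real.sin θ = 2 * s * c := by
    rw [hs, hc, show θ = 2 * (θ / 2) by ring, Real.sin_two_mul]; ring
  have pyth : s ^ 2 + c ^ 2 = 1 := Real.sin_sq_add_cos_sq (θ / 2)
  have hcpos : 0 < c := Real.cos_pos_of_mem_Ioo ⟨by linarith, by linarith⟩
  have hspos : 0 < s := Real.sin_pos_of_pos_of_lt_pi (by linarith) (by linarith)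
  rw [hcosθ, hsinθ] at h10 h11
  -- the two real consequences
  have hA : c * (F 1 1 - F 1 0) - s * (F 0 1 - F 0 0) = 0 := by
    have key : (2 * c) * (c * (F 1 1 - F 1 0) - s * (F 0 1 - F 0 0)) = 0 := by
      linear_combination h11 - h10
    exact (mul_eq_zero.mp key).resolve_left (by positivity)
  have hB : s * (F 1 1 + F 1 0) - c * (F 0 0 + F 0 1) = 0 := by
    have key : (2 * s) * (s * (F 1 1 + F 1 0) - c * (F 0 0 + F 0 1)) = 0 := by
      linear_combination h10 + h11 + 2 * (F 1 0 + F 1 1) * pyth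
    exact (mul_eq_zero.mp key).resolve_left (by positivity)
  -- the four spinors
  set r := Real.sqrt 2 / 2 with hr
  have hcos4 : Real.cos (Real.pi / 4) = r := Real.cos_pi_div_four
  have hsin4 : Real.sin (Real.pi / 4) = r := Real.sin_pi_div_four
  have e00 : eta θ 0 0 = ((r * c + r * s : ℝ) : ℂ) + ((r * s - r * c : ℝ) : ℂ) * Complex.I := by
    rw [eta_eq a00, show Real.pi / 4 - (Real.pi - θ) / 2 = θ / 2 - Real.pi / 4 by ring,
      Real.cos_sub, Real.sin_sub, hcos4, hsin4, ← hc, ← hs]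
    push_cast; ring
  have e01 : eta θ 0 1 = ((r * s - r * c : ℝ) : ℂ) + ((r * c + r * s : ℝ) : ℂ) * Complex.I := by
    rw [eta_eq a01, show Real.pi / 4 - (θ - Real.pi) / 2 = Real.pi - (Real.pi / 4 + θ / 2) by ring,
      Real.cos_pi_sub, Real.sin_pi_sub, Real.cos_add, Real.sin_add, hcos4, hsin4, ← hc, ← hs]
    push_cast; ring
  have e10 : eta θ 1 0 = ((r * c + r * s : ℝ) : ℂ) + ((r * c - r * s : ℝ) : ℂ) * Complex.I := by
    rw [eta_eq a10, Real.cos_sub, Real.sin_sub, hcos4, hsin4, ← hc, ← hs]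
  have e11 : eta θ 1 1 = ((r * c - r * s : ℝ) : ℂ) + ((r * c + r * s : ℝ) : ℂ) * Complex.I := by
    rw [eta_eq a11, show Real.pi / 4 - (-θ) / 2 = Real.pi / 4 + θ / 2 by ring,
      Real.cos_add, Real.sin_add, hcos4, hsin4, ← hc, ← hs]
  rw [e00, e01, e10, e11, Complex.ext_iff]
  constructor
  · simp
    linear_combination r * hA - r * hB
  · simp
    linear_combination r * hA + r * hB
end
end

section
/- Let S(v•₀), S(v°₀), S(v•₁), S(v°₁) be four points in ℂ forming a quadrilateral, and let θ ∈ (0, π/2). Suppose the complex numbers F₀₀, F₀₁, F₁₀, F₁₁ satisfy the propagation equation with parameter θ (F_{pq} = F_{p,1-q}·cos θ + F_{1-p,q}·sin θ for the appropriate consecutive triples), and suppose S(v•₀)-S(v°₀) = F₀₀², S(v•₁)-S(v°₀) = F₁₀², S(v•₁)-S(v°₁) = F₁₁², S(v•₀)-S(v°₁) = F₀₁². Then |S(v•₀)-S(v°₀)| + |S(v•₁)-S(v°₁)| = |S(v•₀)-S(v°₁)| + |S(v•₁)-S(v°₀)|, i.e., the quadrilateral S(v•₀)S(v°₀)S(v•₁)S(v°₁)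 is tangential. -/
/-- **S-embeddings produce tangential quadrilaterals.**
Suppose complex numbers `F₀₀, F₀₁, F₁₀, F₁₁` satisfy the propagation equation
`F_{pq} = F_{p,1-q}·cos θ + F_{1-p,q}·sin θ` (instantiated at the appropriate consecutive
triples, i.e. at the middle corners `c₁₀` and `c₁₁`), and that the vertex images satisfy
`S(v•_p) - S(v°_q) = (F_{pq})²`.  Then the sums of lengths of opposite sides of the
quadrilateral `S(v•₀)S(v°₀)S(v•₁)S(v°₁)` are equal, i.e. the quadrilateral is tangential. -/
theorem s_embedding_tangential_quad (θ : ℝ) (hθ : θ ∈ Set.Ioo 0 (Real.pi / 2))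
    (F00 F01 F10 F11 Svb0 Svb1 Svw0 Svw1 : ℂ)
    (h10 : F10 = F11 * Real.cos θ + F00 * Real.sin θ)
    (h11 : F11 = F10 * Real.cos θ + F01 * Real.sin θ)
    (e00 : Svb0 - Svw0 = F00 ^ 2)
    (e10 : Svb1 - Svw0 = F10 ^ 2)
    (e11 : Svb1 - Svw1 = F11 ^ 2)
    (e01 : Svb0 - Svw1 = F01 ^ 2) :
    ‖Svb0 - Svw0‖ + ‖Svb1 - Svw1‖
      = ‖Svb0 - Svw1‖ + ‖Svb1 - Svw0‖ := by
  rw [e00, e10, e11, e01, norm_pow, norm_pow, norm_pow, norm_pow,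
    Complex.sq_norm, Complex.sq_norm, Complex.sq_norm, Complex.sq_norm]
  obtain ⟨r10re, r10im⟩ := Complex.ext_iff.mp h10
  obtain ⟨r11re, r11im⟩ := Complex.ext_iff.mp h11
  simp only [Complex.add_re, Complex.add_im, Complex.mul_re, Complex.mul_im,
    Complex.ofReal_re, Complex.ofReal_im, mul_zero, zero_mul, sub_zero, add_zero,
    zero_add] at r10re r10im r11re r11im
  set s := Real.sin θ with hsdef
  set c := Real.cos θ with hcdef
  have hs : s ≠ 0 := ne_of_gt (Real.sin_pos_of_pos_of_lt_pi hθ.1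
    (lt_trans hθ.2 (by linarith [Real.pi_pos])))
  have hpy : s ^ 2 + c ^ 2 = 1 := Real.sin_sq_add_cos_sq θ
  have h1 : F00.re * s = F10.re - F11.re * c := by linarith
  have h2 : F00.im * s = F10.im - F11.im * c := by linarith
  have h3 : F01.re * s = F11.re - F10.re * c := by linarith
  have h4 : F01.im * s = F11.im - F10.im * c := by linarith
  simp only [Complex.normSq_apply]
  have key : (F00.re * F00.re + F00.im * F00.im + (F11.re * F11.re + F11.im * F11.im)) * s ^ 2
      = (F01.re * F01.re + F01.im * F01.im + (F10.re * F10.re + F10.im * F10.im)) * s ^ 2 := by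
    linear_combination (F00.re * s + (F10.re - F11.re * c)) * h1
      + (F00.im * s + (F10.im - F11.im * c)) * h2
      - (F01.re * s + (F11.re - F10.re * c)) * h3
      - (F01.im * s + (F11.im - F10.im * c)) * h4
      + (F11.re * F11.re + F11.im * F11.im - F10.re * F10.re - F10.im * F10.im) * hpy
  exact mul_right_cancel₀ (pow_ne_zero 2 hs) key
end
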